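/- The (q,t)-Stirling numbers of the first and second kind are orthogonal: for m ≤ n, Σ_{k=m}^n s_{q,t}[n,k]·S_{q,t}[k,m] = δ_{m,n} and Σ_{k=m}^n S_{q,t}[n,k]·s_{q,t}[k,m] = δ_{m,n}. -/
import Mathlib


/-- The `(q,t)`-analogue `[k]_{q,t}`: for `k` even it is
`(q^{k-2} + q^{k-4} + ⋯ + 1)·t` and for `k` odd it is
`q^{k-1} + (q^{k-3} + q^{k-5} + ⋯ + 1)·t`. -/
def qtB {A : Type*} [CommRing A] (q t : A) (k : ℕ) : A :=
  if Even k then (∑ i ∈ Finset.range (k / 2), q ^ (2 * i)) * t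
  else q ^ (k - 1) + (∑ i ∈ Finset.range (k / 2), q ^ (2 * i)) * t

/-- The (signed) `(q,t)`-Stirling numbers of the first kind:
`s_{q,t}[n,k] = s_{q,t}[n-1,k-1] - [n-1]_{q,t}·s_{q,t}[n-1,k]`, `s_{q,t}[n,0] = δ_{n,0}`. -/
def sqt {A : Type*} [CommRing A] (q t : A) : ℕ → ℕ → A
  | 0, 0 => 1
  | 0, _ + 1 => 0
  | _ + 1, 0 => 0
  | n + 1, k + 1 => sqt q t n k - qtB q t n * sqt q t n (k + 1)

/-- The `(q,t)`-Stirling numbers of the second kind: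
`S_{q,t}[n,k] = S_{q,t}[n-1,k-1] + [k]_{q,t}·S_{q,t}[n-1,k]`, `S_{q,t}[n,0] = δ_{n,0}`. -/
def Sqt {A : Type*} [CommRing A] (q t : A) : ℕ → ℕ → A
  | 0, 0 => 1
  | 0, _ + 1 => 0
  | _ + 1, 0 => 0
  | n + 1, k + 1 => Sqt q t n k + qtB q t (k + 1) * Sqt q t n (k + 1)

lemma sqt_zero {A : Type*} [CommRing A] (q t : A) : ∀ n k : ℕ, n < k → sqt q t n k = 0
  | 0, k + 1, _ => rfl
  | n + 1, k + 1, h => by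
    rw [sqt, sqt_zero q t n k (by omega), sqt_zero q t n (k + 1) (by omega)]
    ring

lemma Sqt_zero {A : Type*} [CommRing A] (q t : A) : ∀ n k : ℕ, n < k → Sqt q t n k = 0
  | 0, k + 1, _ => rfl
  | n + 1, k + 1, h => by
    rw [Sqt, Sqt_zero q t n k (by omega), Sqt_zero q t n (k + 1) (by omega)]
    ring

lemma ortho1 {A : Type*} [CommRing A] (q t : A) :
    ∀ n m : ℕ, (∑ k ∈ Finset.range (n + 1), sqt q t n k * Sqt q t k m) =
      (if m = n then 1 else 0)
  | 0, 0 => by simp [sqt, Sqt]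
  | 0, m + 1 => by simp [sqt, Sqt]
  | n + 1, 0 => by
    rw [Finset.sum_range_succ']
    have : ∀ j ∈ Finset.range (n + 1),
        sqt q t (n + 1) (j + 1) * Sqt q t (j + 1) 0 = 0 := by
      intro j _; rw [show Sqt q t (j + 1) 0 = 0 from rfl]; ring
    rw [Finset.sum_congr rfl this]
    simp [sqt]
  | n + 1, m + 1 => by
    have hshift : (∑ j ∈ Finset.range (n + 1), sqt q t n (j + 1) * Sqt q t (j + 1) (m + 1)) =
        ∑ k ∈ Finset.range (n + 1), sqt q t n k * Sqt q t k (m + 1) := by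
      have h1 := Finset.sum_range_succ' (fun k => sqt q t n k * Sqt q t k (m + 1)) (n + 1)
      rw [Finset.sum_range_succ (fun k => sqt q t n k * Sqt q t k (m + 1)) (n + 1)] at h1
      simp only [sqt_zero q t n (n + 1) (by omega), zero_mul, add_zero,
        show Sqt q t 0 (m + 1) = 0 from rfl, mul_zero] at h1
      exact h1.symm
    calc (∑ k ∈ Finset.range (n + 1 + 1), sqt q t (n + 1) k * Sqt q t k (m + 1))
        = (∑ j ∈ Finset.range (n + 1), sqt q t (n + 1) (j + 1) * Sqt q t (j + 1) (m + 1))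
            + sqt q t (n + 1) 0 * Sqt q t 0 (m + 1) := Finset.sum_range_succ' _ _
      _ = ∑ j ∈ Finset.range (n + 1), (sqt q t n j * Sqt q t j m
            + qtB q t (m + 1) * (sqt q t n j * Sqt q t j (m + 1))
            - qtB q t n * (sqt q t n (j + 1) * Sqt q t (j + 1) (m + 1))) := by
          rw [show sqt q t (n + 1) 0 = 0 from rfl, zero_mul, add_zero]
          refine Finset.sum_congr rfl fun j _ => ?_
          rw [sqt, Sqt]; ring
      _ = (∑ j ∈ Finset.range (n + 1), sqt q t n j * Sqt q t j m)
            + qtB q t (m + 1) * (∑ j ∈ Finset.range (n + 1), sqt q t n j * Sqt q t j (m + 1))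
            - qtB q t n * (∑ j ∈ Finset.range (n + 1), sqt q t n (j + 1) * Sqt q t (j + 1) (m + 1)) := by
          rw [Finset.sum_sub_distrib, Finset.sum_add_distrib, Finset.mul_sum, Finset.mul_sum]
      _ = (if m = n then 1 else 0)
            + qtB q t (m + 1) * (if m + 1 = n then 1 else 0)
            - qtB q t n * (if m + 1 = n then 1 else 0) := by
          rw [hshift, ortho1 q t n m, ortho1 q t n (m + 1)]
      _ = (if m + 1 = n + 1 then 1 else 0) := by
          by_cases h2 : m + 1 = n
          · subst h2; simp
          · by_cases h3 : m = n <;> simp [h2, h3]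

lemma ortho2 {A : Type*} [CommRing A] (q t : A) :
    ∀ n m : ℕ, (∑ k ∈ Finset.range (n + 1), Sqt q t n k * sqt q t k m) =
      (if m = n then 1 else 0)
  | 0, 0 => by simp [sqt, Sqt]
  | 0, m + 1 => by simp [sqt, Sqt]
  | n + 1, 0 => by
    rw [Finset.sum_range_succ']
    have : ∀ j ∈ Finset.range (n + 1),
        Sqt q t (n + 1) (j + 1) * sqt q t (j + 1) 0 = 0 := by
      intro j _; rw [show sqt q t (j + 1) 0 = 0 from rfl]; ring
    rw [Finset.sum_congr rfl this]
    simp [Sqt]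
  | n + 1, m + 1 => by
    have hshift : (∑ j ∈ Finset.range (n + 1),
          qtB q t (j + 1) * (Sqt q t n (j + 1) * sqt q t (j + 1) (m + 1))) =
        ∑ k ∈ Finset.range (n + 1), qtB q t k * (Sqt q t n k * sqt q t k (m + 1)) := by
      have h1 := Finset.sum_range_succ'
        (fun k => qtB q t k * (Sqt q t n k * sqt q t k (m + 1))) (n + 1)
      rw [Finset.sum_range_succ
        (fun k => qtB q t k * (Sqt q t n k * sqt q t k (m + 1))) (n + 1)] at h1
      simp only [Sqt_zero q t n (n + 1) (by omega), zero_mul, mul_zero, add_zero,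
        show sqt q t 0 (m + 1) = 0 from rfl] at h1
      exact h1.symm
    calc (∑ k ∈ Finset.range (n + 1 + 1), Sqt q t (n + 1) k * sqt q t k (m + 1))
        = (∑ j ∈ Finset.range (n + 1), Sqt q t (n + 1) (j + 1) * sqt q t (j + 1) (m + 1))
            + Sqt q t (n + 1) 0 * sqt q t 0 (m + 1) := Finset.sum_range_succ' _ _
      _ = ∑ j ∈ Finset.range (n + 1), (Sqt q t n j * sqt q t j m
            - qtB q t j * (Sqt q t n j * sqt q t j (m + 1))
            + qtB q t (j + 1) * (Sqt q t n (j + 1) * sqt q t (j + 1) (m + 1))) := by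
          rw [show Sqt q t (n + 1) 0 = 0 from rfl, zero_mul, add_zero]
          refine Finset.sum_congr rfl fun j _ => ?_
          rw [sqt, Sqt]; ring
      _ = (∑ j ∈ Finset.range (n + 1), Sqt q t n j * sqt q t j m)
            - (∑ j ∈ Finset.range (n + 1), qtB q t j * (Sqt q t n j * sqt q t j (m + 1)))
            + (∑ j ∈ Finset.range (n + 1),
                qtB q t (j + 1) * (Sqt q t n (j + 1) * sqt q t (j + 1) (m + 1))) := by
          rw [Finset.sum_add_distrib, Finset.sum_sub_distrib]
      _ = (if m = n then 1 else 0) := by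
          rw [hshift, ortho2 q t n m]; ring
      _ = (if m + 1 = n + 1 then 1 else 0) := by simp

theorem qt_orthogonality {A : Type*} [CommRing A] (q t : A) (m n : ℕ) (h : m ≤ n) :
    (∑ k ∈ Finset.Icc m n, sqt q t n k * Sqt q t k m) =
        (if m = n then 1 else 0) ∧
    (∑ k ∈ Finset.Icc m n, Sqt q t n k * sqt q t k m) =
        (if m = n then 1 else 0) := by
  have hsub : Finset.Icc m n ⊆ Finset.range (n + 1) := by
    intro x hx
    simp only [Finset.mem_Icc] at hx
    simp only [Finset.mem_range]
    omega
  constructor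
  · rw [Finset.sum_subset hsub, ortho1]
    intro x hx hx'
    simp only [Finset.mem_range] at hx
    simp only [Finset.mem_Icc] at hx'
    rw [Sqt_zero q t x m (by omega), mul_zero]
  · rw [Finset.sum_subset hsub, ortho2]
    intro x hx hx'
    simp only [Finset.mem_range] at hx
    simp only [Finset.mem_Icc] at hx'
    rw [sqt_zero q t x m (by omega), mul_zero]
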